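/- arXiv:1910.14482 — 4 statements merged into one kernel-verified Lean document; each statement's English description precedes it below -/
import Mathlib

section
/- Let μ and ν be Borel probability measures on ℝ₊ = [0,∞) with bounded support, let u ≥ 0, and set a := ξ'(u) + μ⁻¹(1). Then ∫₀¹ ξ*( ν⁻¹(x) − μ⁻¹(x) ) dx ≥ ∫₀¹ ξ*( min(ν⁻¹(x), a) − μ⁻¹(x) ) dx + u ∫₀¹ ( ν⁻¹(x) − min(ν⁻¹(x), a) ) dx. -/
open MeasureTheory

/-- `ξ(r) = Σ_{p ≥ 2} β_p² r^p`, reindexed so that `β (p+2)` is the coefficient of `r^(p+2)`. -/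
noncomputable def xi (β : ℕ → ℝ) (r : ℝ) : ℝ := ∑' p : ℕ, (β (p + 2)) ^ 2 * r ^ (p + 2)

/-- The derivative series `ξ'(r) = Σ_{p ≥ 2} p β_p² r^(p-1)`. -/
noncomputable def xi' (β : ℕ → ℝ) (r : ℝ) : ℝ :=
  ∑' p : ℕ, ((p + 2 : ℕ) : ℝ) * (β (p + 2)) ^ 2 * r ^ (p + 1)

/-- `ξ*(s) = sup_{r ≥ 0} (r s - ξ(r))`. -/
noncomputable def xiStar (β : ℕ → ℝ) (s : ℝ) : ℝ :=
  sSup {y : ℝ | ∃ r : ℝ, 0 ≤ r ∧ y = r * s - xi β r}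

/-- The quantile function `μ⁻¹(r) = inf {s ≥ 0 : μ([0,s]) ≥ r}`. -/
noncomputable def quantile (μ : Measure ℝ) (r : ℝ) : ℝ :=
  sInf {s : ℝ | 0 ≤ s ∧ r ≤ (μ (Set.Icc 0 s)).toReal}

/-!
Pointwise in `x`, put `s = ν⁻¹(x) - μ⁻¹(x)` and `s' = min(ν⁻¹(x), a) - μ⁻¹(x)`. Either `s' = s`,
or `ξ'(u) ≤ s' ≤ s` because `μ⁻¹(x) ≤ μ⁻¹(1)`; then `ξ*(s') + u (s - s') ≤ ξ*(s)`, since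
convexity of `ξ` forces `ξ*` to grow with slope at least `u` beyond `ξ'(u)`. Integrating over
`[0, 1]` gives the claim; the integrands are bounded and built from monotone quantile functions,
hence integrable.
-/

open Set Interval

section xi

variable {β : ℕ → ℝ} (hconv : ∀ r : ℝ, Summable fun p : ℕ => (β (p + 2)) ^ 2 * r ^ (p + 2))
include hconv

lemma summable_xi' (u : ℝ) :
    Summable fun p : ℕ => ((p + 2 : ℕ) : ℝ) * (β (p + 2)) ^ 2 * u ^ (p + 1) := by
  refine (hconv (2 * max 1 |u|)).of_norm_bounded fun p => ?_
  have hp : ((p + 2 : ℕ) : ℝ) ≤ 2 ^ (p + 2) := by exact_mod_cast (Nat.lt_two_pow_self).le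
  have hu : |u| ^ (p + 1) ≤ max 1 |u| ^ (p + 2) :=
    (pow_le_pow_left₀ (abs_nonneg u) (le_max_right _ _) _).trans
      (pow_le_pow_right₀ (le_max_left _ _) (by omega))
  calc ‖((p + 2 : ℕ) : ℝ) * (β (p + 2)) ^ 2 * u ^ (p + 1)‖
      = ((p + 2 : ℕ) : ℝ) * (β (p + 2)) ^ 2 * |u| ^ (p + 1) := by
        simp only [Real.norm_eq_abs, abs_mul, abs_pow, Nat.abs_cast, sq_abs]
    _ ≤ 2 ^ (p + 2) * (β (p + 2)) ^ 2 * max 1 |u| ^ (p + 2) := by gcongr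
    _ = (β (p + 2)) ^ 2 * (2 * max 1 |u|) ^ (p + 2) := by ring

lemma xi_sub_xi_le {r u : ℝ} (hr : 0 ≤ r) (hru : r ≤ u) :
    xi β u - xi β r ≤ (u - r) * xi' β u := by
  rw [xi, xi, ← (hconv u).tsum_sub (hconv r), xi', ← tsum_mul_left]
  refine ((hconv u).sub (hconv r)).tsum_le_tsum (fun p => ?_) ((summable_xi' hconv u).mul_left _)
  have hpow : u ^ (p + 2) - r ^ (p + 2) ≤ (u - r) * ((p + 2 : ℕ) : ℝ) * u ^ (p + 1) := by
    have h := abs_pow_sub_pow_le u r (p + 2)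
    rwa [abs_of_nonneg (sub_nonneg.2 hru), abs_of_nonneg hr, abs_of_nonneg (hr.trans hru),
      max_eq_left hru, abs_of_nonneg (sub_nonneg.2 (pow_le_pow_left₀ hr hru _))] at h
  calc (β (p + 2)) ^ 2 * u ^ (p + 2) - (β (p + 2)) ^ 2 * r ^ (p + 2)
      = (β (p + 2)) ^ 2 * (u ^ (p + 2) - r ^ (p + 2)) := by ring
    _ ≤ (β (p + 2)) ^ 2 * ((u - r) * ((p + 2 : ℕ) : ℝ) * u ^ (p + 1)) := by gcongr
    _ = (u - r) * (((p + 2 : ℕ) : ℝ) * (β (p + 2)) ^ 2 * u ^ (p + 1)) := by ring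

end xi

section xiStar

variable {β : ℕ → ℝ}

lemma xiStar_le {s y : ℝ} (h : ∀ r, 0 ≤ r → r * s - xi β r ≤ y) : xiStar β s ≤ y :=
  csSup_le ⟨0 * s - xi β 0, 0, le_rfl, rfl⟩ fun _ ⟨r, hr, hy⟩ => hy ▸ h r hr

variable (hconv : ∀ r : ℝ, Summable fun p : ℕ => (β (p + 2)) ^ 2 * r ^ (p + 2))
  (hβ : ∃ p : ℕ, β (p + 2) ≠ 0)
include hconv hβ

/-- `ξ` dominates the quadratic `c (r² - 1)` with `c = β_q² > 0`, so `r s - ξ(r)` is bounded. -/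
lemma bddAbove_xiStar_set (s : ℝ) : BddAbove {y : ℝ | ∃ r : ℝ, 0 ≤ r ∧ y = r * s - xi β r} := by
  obtain ⟨q, hq⟩ := hβ
  set c := (β (q + 2)) ^ 2
  have hc : 0 < c := by positivity
  refine ⟨s ^ 2 / (4 * c) + c, ?_⟩
  rintro _ ⟨r, hr, rfl⟩
  have hxi : c * r ^ (q + 2) ≤ xi β r :=
    (hconv r).le_tsum q fun p _ => mul_nonneg (sq_nonneg _) (pow_nonneg hr _)
  have hpow : r ^ 2 - 1 ≤ r ^ (q + 2) := by
    rcases le_total r 1 with h | h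
    · nlinarith [pow_nonneg hr (q + 2)]
    · linarith [pow_le_pow_right₀ h (show 2 ≤ q + 2 by omega)]
  have hquad : r * s - c * r ^ 2 ≤ s ^ 2 / (4 * c) := by
    rw [le_div_iff₀ (by positivity)]
    nlinarith [sq_nonneg (2 * c * r - s)]
  nlinarith

lemma le_xiStar {r : ℝ} (hr : 0 ≤ r) (s : ℝ) : r * s - xi β r ≤ xiStar β s :=
  le_csSup (bddAbove_xiStar_set hconv hβ s) ⟨r, hr, rfl⟩

lemma xiStar_nonneg (s : ℝ) : 0 ≤ xiStar β s := by
  simpa [xi] using le_xiStar hconv hβ le_rfl s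

lemma xiStar_mono : Monotone (xiStar β) := fun _ _ hs =>
  xiStar_le fun r hr =>
    (by gcongr : r * _ - xi β r ≤ r * _ - xi β r).trans (le_xiStar hconv hβ hr _)

/-- A candidate `r < u` for `ξ*(s')` is beaten at `s` by `u`, by the tangent-line inequality
`ξ(u) - ξ(r) ≤ (u - r) ξ'(u)`; a candidate `r ≥ u` is beaten by itself. -/
lemma xiStar_add_mul_sub_le {u s s' : ℝ} (hu : 0 ≤ u) (hs' : xi' β u ≤ s') (hs : s' ≤ s) :
    xiStar β s' + u * (s - s') ≤ xiStar β s := by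
  rw [← le_sub_iff_add_le]
  refine xiStar_le fun r hr => le_sub_iff_add_le.2 ?_
  rcases le_total u r with hur | hru
  · have : u * (s - s') ≤ r * (s - s') := by gcongr
    linarith [le_xiStar hconv hβ hr s]
  · have : (u - r) * xi' β u ≤ (u - r) * s' := by gcongr
    linarith [xi_sub_xi_le hconv hr hru, le_xiStar hconv hβ hu s]

lemma xiStar_min_add_mul_le {u m t : ℝ} (hu : 0 ≤ u) (ht : t ≤ m) (v : ℝ) :
    xiStar β (min v (xi' β u + m) - t) + u * (v - min v (xi' β u + m)) ≤ xiStar β (v - t) := by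
  rcases le_total v (xi' β u + m) with h | h
  · simp [min_eq_left h]
  · rw [min_eq_right h]
    convert xiStar_add_mul_sub_le hconv hβ hu (by linarith) (by linarith : xi' β u + m - t ≤ v - t)
      using 3
    ring

lemma intervalIntegrable_xiStar_comp {f : ℝ → ℝ} {a b C : ℝ}
    (hf : AEMeasurable f (volume.restrict (Ι a b))) (hfC : ∀ x ∈ Ι a b, f x ≤ C) :
    IntervalIntegrable (fun x => xiStar β (f x)) volume a b := by
  refine (intervalIntegrable_const (c := xiStar β C)).mono_fun'
    ((xiStar_mono hconv hβ).measurable.comp_aemeasurable hf).aestronglyMeasurable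
    (ae_restrict_of_forall_mem measurableSet_uIoc fun x hx => ?_)
  show ‖xiStar β (f x)‖ ≤ xiStar β C
  rw [Real.norm_of_nonneg (xiStar_nonneg hconv hβ _)]
  exact xiStar_mono hconv hβ (hfC x hx)

end xiStar

section quantile

variable {μ : Measure ℝ}

lemma quantile_nonneg (x : ℝ) : 0 ≤ quantile μ x :=
  Real.sInf_nonneg fun _ hs => hs.1

variable [IsProbabilityMeasure μ] (hμ0 : μ (Iio 0) = 0) (hμb : ∃ M : ℝ, μ (Ioi M) = 0)
include hμ0 hμb

lemma exists_measure_Icc_eq_one : ∃ M, 0 ≤ M ∧ μ (Icc 0 M) = 1 := by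
  obtain ⟨M, hM⟩ := hμb
  refine ⟨max M 0, le_max_right _ _, (prob_compl_eq_zero_iff measurableSet_Icc).1 ?_⟩
  refine measure_mono_null (fun t ht => ?_) (measure_union_null hμ0
    (measure_mono_null (Ioi_subset_Ioi (le_max_left M 0)) hM))
  simpa only [mem_compl_iff, mem_Icc, not_and_or, not_le, mem_union, mem_Iio, mem_Ioi] using ht

lemma monotoneOn_quantile : MonotoneOn (quantile μ) (Iic 1) := by
  intro x _ y hy hxy
  obtain ⟨M, hM0, hM⟩ := exists_measure_Icc_eq_one hμ0 hμb
  refine csInf_le_csInf ⟨0, fun s hs => hs.1⟩ ⟨M, hM0, by simpa [hM] using hy⟩ ?_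
  exact fun s ⟨hs0, hs⟩ => ⟨hs0, hxy.trans hs⟩

lemma quantile_le_quantile_one {x : ℝ} (hx : x ≤ 1) : quantile μ x ≤ quantile μ 1 :=
  monotoneOn_quantile hμ0 hμb hx self_mem_Iic hx

lemma monotoneOn_quantile_uIcc : MonotoneOn (quantile μ) (uIcc 0 1) :=
  (monotoneOn_quantile hμ0 hμb).mono fun _ hx => (uIcc_of_le (zero_le_one (α := ℝ)) ▸ hx).2

lemma aemeasurable_quantile : AEMeasurable (quantile μ) (volume.restrict (Ι 0 1)) :=
  aemeasurable_restrict_of_monotoneOn measurableSet_uIoc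
    ((monotoneOn_quantile_uIcc hμ0 hμb).mono uIoc_subset_uIcc)

end quantile

/-- for probability measures `μ, ν` on `ℝ₊` with bounded support, `u ≥ 0` and
`a = ξ'(u) + μ⁻¹(1)`,
`∫₀¹ ξ*(ν⁻¹(x) - μ⁻¹(x)) dx ≥ ∫₀¹ ξ*(min(ν⁻¹(x), a) - μ⁻¹(x)) dx
  + u ∫₀¹ (ν⁻¹(x) - min(ν⁻¹(x), a)) dx`. -/
theorem xiStar_integral_truncation (β : ℕ → ℝ)
    (hconv : ∀ r : ℝ, Summable fun p : ℕ => (β (p + 2)) ^ 2 * r ^ (p + 2))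
    (hβ : ∃ p : ℕ, β (p + 2) ≠ 0)
    (μ ν : Measure ℝ) [IsProbabilityMeasure μ] [IsProbabilityMeasure ν]
    (hμ0 : μ (Set.Iio 0) = 0) (hν0 : ν (Set.Iio 0) = 0)
    (hμb : ∃ M : ℝ, μ (Set.Ioi M) = 0) (hνb : ∃ M : ℝ, ν (Set.Ioi M) = 0)
    (u : ℝ) (hu : 0 ≤ u) :
    (∫ x in (0:ℝ)..1,
        xiStar β (min (quantile ν x) (xi' β u + quantile μ 1) - quantile μ x))
      + u * ∫ x in (0:ℝ)..1,
          (quantile ν x - min (quantile ν x) (xi' β u + quantile μ 1))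
      ≤ ∫ x in (0:ℝ)..1, xiStar β (quantile ν x - quantile μ x) := by
  set a := xi' β u + quantile μ 1
  have hνle : ∀ x ∈ Ι (0:ℝ) 1, quantile ν x ≤ quantile ν 1 := fun x hx =>
    quantile_le_quantile_one hν0 hνb (uIoc_of_le (zero_le_one (α := ℝ)) ▸ hx).2
  have hQμ := aemeasurable_quantile hμ0 hμb
  have hQν := aemeasurable_quantile hν0 hνb
  have hνmono := monotoneOn_quantile_uIcc hν0 hνb
  have hint1 : IntervalIntegrable (fun x => xiStar β (min (quantile ν x) a - quantile μ x))
      volume 0 1 :=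
    intervalIntegrable_xiStar_comp hconv hβ (C := quantile ν 1)
      ((hQν.min aemeasurable_const).sub hQμ) fun x hx => by
      linarith [min_le_left (quantile ν x) a, hνle x hx, quantile_nonneg (μ := μ) x]
  have hint2 : IntervalIntegrable (fun x => quantile ν x - min (quantile ν x) a) volume 0 1 :=
    hνmono.intervalIntegrable.sub (hνmono.min monotoneOn_const).intervalIntegrable
  have hint3 : IntervalIntegrable (fun x => xiStar β (quantile ν x - quantile μ x)) volume 0 1 :=
    intervalIntegrable_xiStar_comp hconv hβ (C := quantile ν 1) (hQν.sub hQμ) fun x hx => by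
      linarith [hνle x hx, quantile_nonneg (μ := μ) x]
  rw [← intervalIntegral.integral_const_mul,
    ← intervalIntegral.integral_add hint1 (hint2.const_mul u)]
  exact intervalIntegral.integral_mono_on zero_le_one (hint1.add (hint2.const_mul u)) hint3
    fun x hx => xiStar_min_add_mul_le hconv hβ hu (quantile_le_quantile_one hμ0 hμb hx.2) _
end

section
/- Let μ and ν be Borel probability measures on ℝ₊ = [0,∞) with bounded support. Then the function s ↦ min( ν([0,s]), μ([0,s]) ) on ℝ₊ is the cumulative distribution function of a Borel probability measure ν̃ on ℝ₊ with bounded support, and the quantile function of ν̃ satisfies ν̃⁻¹(r) = max( ν⁻¹(r), μ⁻¹(r) ) for every r ∈ (0,1]. -/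
open MeasureTheory

/-!
Everything is read off the distribution functions. The pointwise minimum of two c.d.f.s is again
right-continuous, monotone, and tends to `0` and `1` at `∓∞`, so it is the c.d.f. of a probability
measure `ν̃`, supported in `ℝ₊` and bounded because both c.d.f.s vanish on `(-∞,0)` and equal `1`
beyond a common bound. The sets `{s ≥ 0 : r ≤ F s}` defining the quantiles are upper sets of `ℝ`;
since upper sets of a linear order are nested, the infimum of the intersection of two of them is
the larger of the two infima.
-/

open Filter ProbabilityTheory Set Topology

lemma csInf_inter_of_isUpperSet {α : Type*} [ConditionallyCompleteLinearOrder α] {A B : Set α}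
    (hA : IsUpperSet A) (hB : IsUpperSet B) (hA₀ : A.Nonempty) (hB₀ : B.Nonempty)
    (hAb : BddBelow A) (hBb : BddBelow B) :
    sInf (A ∩ B) = max (sInf A) (sInf B) := by
  rcases hA.total hB with hAB | hBA
  · rw [inter_eq_left.mpr hAB, max_eq_left (csInf_le_csInf hBb hA₀ hAB)]
  · rw [inter_eq_right.mpr hBA, max_eq_right (csInf_le_csInf hAb hB₀ hBA)]

namespace StieltjesFunction

variable {R : Type*} [LinearOrder R] [TopologicalSpace R]

protected def min (f g : StieltjesFunction R) : StieltjesFunction R where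
  toFun x := Min.min (f x) (g x)
  mono' := f.mono.min g.mono
  right_continuous' x := (f.right_continuous x).min (g.right_continuous x)

@[simp]
lemma min_apply (f g : StieltjesFunction R) (x : R) : f.min g x = Min.min (f x) (g x) :=
  rfl

end StieltjesFunction

namespace ProbabilityTheory

variable {κ : Measure ℝ}

lemma isUpperSet_cdf_superlevel (r : ℝ) : IsUpperSet (Ici 0 ∩ cdf κ ⁻¹' Ici r) :=
  isUpperSet_Ici 0 |>.inter <| (isUpperSet_Ici r).preimage (monotone_cdf κ)

variable [IsProbabilityMeasure κ]

lemma measure_Iio_eq_zero_iff_cdf {a : ℝ} : κ (Iio a) = 0 ↔ ∀ x < a, cdf κ x = 0 := by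
  constructor
  · intro h x hx
    rw [cdf_eq_real, measureReal_def, measure_mono_null (Iic_subset_Iio.mpr hx) h,
      ENNReal.toReal_zero]
  · intro h
    have hlim : Function.leftLim (cdf κ) a = 0 :=
      leftLim_eq_of_tendsto <| tendsto_const_nhds.congr' <|
        eventually_nhdsWithin_of_forall fun x hx ↦ (h x hx).symm
    rw [← measure_cdf κ, (cdf κ).measure_Iio (tendsto_cdf_atBot κ), hlim, sub_zero,
      ENNReal.ofReal_zero]

lemma measure_Ioi_eq_zero_iff_cdf {M : ℝ} : κ (Ioi M) = 0 ↔ cdf κ M = 1 := by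
  rw [← compl_Iic, prob_compl_eq_one_sub measurableSet_Iic, tsub_eq_zero_iff_le, ← ofReal_cdf,
    ENNReal.one_le_ofReal]
  exact ⟨fun h ↦ le_antisymm (cdf_le_one κ M) h, ge_of_eq⟩

lemma cdf_eq_one_of_le {M x : ℝ} (hM : κ (Ioi M) = 0) (hx : M ≤ x) : cdf κ x = 1 :=
  le_antisymm (cdf_le_one κ x) <|
    measure_Ioi_eq_zero_iff_cdf.mp hM ▸ monotone_cdf κ hx

lemma measure_Icc_zero_toReal (h₀ : κ (Iio 0) = 0) (s : ℝ) :
    (κ (Icc 0 s)).toReal = cdf κ s := by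
  have : Icc 0 s = Iic s \ Iio 0 := by ext; simp [and_comm]
  rw [this, measure_sdiff_null h₀, cdf_eq_real, measureReal_def]

lemma quantile_eq_sInf_cdf (h₀ : κ (Iio 0) = 0) (r : ℝ) :
    quantile κ r = sInf (Ici 0 ∩ cdf κ ⁻¹' Ici r) := by
  simp only [quantile, measure_Icc_zero_toReal h₀]
  rfl

lemma cdf_superlevel_nonempty {M r : ℝ} (hM : κ (Ioi M) = 0) (hr : r ≤ 1) :
    (Ici 0 ∩ cdf κ ⁻¹' Ici r).Nonempty :=
  ⟨max M 0, le_max_right M 0, by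
    simpa [cdf_eq_one_of_le hM (le_max_left M 0)] using hr⟩

section MinCDF

variable (μ ν : Measure ℝ)

lemma tendsto_min_cdf_atBot : Tendsto ((cdf μ).min (cdf ν)) atBot (𝓝 0) := by
  have h := (tendsto_cdf_atBot μ).min (tendsto_cdf_atBot ν)
  rwa [min_self] at h

lemma tendsto_min_cdf_atTop : Tendsto ((cdf μ).min (cdf ν)) atTop (𝓝 1) := by
  have h := (tendsto_cdf_atTop μ).min (tendsto_cdf_atTop ν)
  rwa [min_self] at h

noncomputable def minCDFMeasure : Measure ℝ := ((cdf μ).min (cdf ν)).measure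

instance : IsProbabilityMeasure (minCDFMeasure μ ν) :=
  ⟨by rw [minCDFMeasure, StieltjesFunction.measure_univ _ (tendsto_min_cdf_atBot μ ν)
    (tendsto_min_cdf_atTop μ ν), sub_zero, ENNReal.ofReal_one]⟩

lemma cdf_minCDFMeasure (x : ℝ) : cdf (minCDFMeasure μ ν) x = min (cdf μ x) (cdf ν x) := by
  rw [minCDFMeasure, cdf_measure_stieltjesFunction _ (tendsto_min_cdf_atBot μ ν)
    (tendsto_min_cdf_atTop μ ν), StieltjesFunction.min_apply]

end MinCDF

end ProbabilityTheory

/-- for probability measures `μ, ν` on `ℝ₊` with bounded support, the function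
`s ↦ min(ν([0,s]), μ([0,s]))` on `ℝ₊` is the c.d.f. of a probability measure `ν̃` on `ℝ₊` with
bounded support, whose quantile function is `ν̃⁻¹(r) = max(ν⁻¹(r), μ⁻¹(r))` for `r ∈ (0,1]`. -/
theorem exists_measure_cdf_min (μ ν : Measure ℝ)
    [IsProbabilityMeasure μ] [IsProbabilityMeasure ν]
    (hμ0 : μ (Set.Iio 0) = 0) (hν0 : ν (Set.Iio 0) = 0)
    (hμb : ∃ M : ℝ, μ (Set.Ioi M) = 0) (hνb : ∃ M : ℝ, ν (Set.Ioi M) = 0) :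
    ∃ νt : Measure ℝ, IsProbabilityMeasure νt ∧
      νt (Set.Iio 0) = 0 ∧ (∃ M : ℝ, νt (Set.Ioi M) = 0) ∧
      (∀ s : ℝ, 0 ≤ s →
        (νt (Set.Icc 0 s)).toReal =
          min ((ν (Set.Icc 0 s)).toReal) ((μ (Set.Icc 0 s)).toReal)) ∧
      (∀ r : ℝ, r ∈ Set.Ioc (0:ℝ) 1 →
        quantile νt r = max (quantile ν r) (quantile μ r)) := by
  obtain ⟨Mμ, hMμ⟩ := hμb
  obtain ⟨Mν, hMν⟩ := hνb
  have hνt0 : minCDFMeasure ν μ (Iio 0) = 0 := measure_Iio_eq_zero_iff_cdf.mpr fun x hx ↦ by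
    rw [cdf_minCDFMeasure, measure_Iio_eq_zero_iff_cdf.mp hν0 x hx,
      measure_Iio_eq_zero_iff_cdf.mp hμ0 x hx, min_self]
  refine ⟨minCDFMeasure ν μ, inferInstance, hνt0, ⟨max Mν Mμ, ?_⟩, fun s _ ↦ ?_, fun r hr ↦ ?_⟩
  · rw [measure_Ioi_eq_zero_iff_cdf, cdf_minCDFMeasure, cdf_eq_one_of_le hMν (le_max_left _ _),
      cdf_eq_one_of_le hMμ (le_max_right _ _), min_self]
  · rw [measure_Icc_zero_toReal hνt0, measure_Icc_zero_toReal hν0, measure_Icc_zero_toReal hμ0,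
      cdf_minCDFMeasure]
  · have hsuperlevel : Ici 0 ∩ cdf (minCDFMeasure ν μ) ⁻¹' Ici r =
        (Ici 0 ∩ cdf ν ⁻¹' Ici r) ∩ (Ici 0 ∩ cdf μ ⁻¹' Ici r) := by
      ext s
      simp [cdf_minCDFMeasure, and_assoc, and_left_comm]
    rw [quantile_eq_sInf_cdf hνt0, quantile_eq_sInf_cdf hν0, quantile_eq_sInf_cdf hμ0,
      hsuperlevel, csInf_inter_of_isUpperSet (isUpperSet_cdf_superlevel r)
        (isUpperSet_cdf_superlevel r) (cdf_superlevel_nonempty hMν hr.2)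
        (cdf_superlevel_nonempty hMμ hr.2) ⟨0, fun _ hx ↦ hx.1⟩ ⟨0, fun _ hx ↦ hx.1⟩]
end

section
/- Let n ≥ 1 and let A be an n×n real symmetric matrix with nonnegative entries such that A_{ii} ≥ A_{ij} for all i, j, and such that the ultrametric inequality A_{ij} ≥ min(A_{ik}, A_{kj}) holds for all i, j, k. Then, for every nondecreasing function g : [0,∞) → [0,∞), the n×n matrix with entries g(A_{ij}) is positive semidefinite. In particular, A itself is positive semidefinite. -/
/-! The superlevel relations `t ≤ A i j` of a symmetric ultrametric matrix are symmetric and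
transitive, so each indicator matrix `[t ≤ A i j]` is the Gram matrix of vectors `e_[i]`
(one orthonormal vector per class, `0` off the domain), hence positive semidefinite.
If `s` is the smallest positive entry of `A ≥ 0`, then `A = s • [s ≤ A] + (A - s)⁺`, and
`(A - s)⁺` is again ultrametric with fewer positive entries, so induction shows that `A` is
positive semidefinite. A nondecreasing nonnegative `g` preserves ultrametricity, which covers
`g (A i j)`. -/

open Finset

namespace Matrix

variable {ι : Type*}

structure IsUltrametric (A : Matrix ι ι ℝ) : Prop where
  isSymm : A.IsSymm
  nonneg : ∀ i j, 0 ≤ A i j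
  min_le : ∀ i j k, min (A i k) (A k j) ≤ A i j

noncomputable def superlevelIndicator (A : Matrix ι ι ℝ) (t : ℝ) : Matrix ι ι ℝ :=
  of fun i j => if t ≤ A i j then 1 else 0

theorem posSemidef_of_symm_of_trans [Fintype ι] {R : ι → ι → Prop} [DecidableRel R]
    (hsymm : ∀ i j, R i j → R j i) (htrans : ∀ i j k, R i j → R j k → R i k) :
    (of fun i j => if R i j then (1 : ℝ) else 0).PosSemidef := by
  classical
  have hrefl : ∀ {i j}, R i j → R i i := fun h => htrans _ _ _ h (hsymm _ _ h)
  have hclass : ∀ {i j}, R i i → (univ.filter (R i) = univ.filter (R j) ↔ R i j) := by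
    intro i j hi
    refine ⟨fun h => hsymm _ _ ?_, fun h => ?_⟩
    · simpa using (Finset.ext_iff.mp h i).1 (by simpa using hi)
    · ext k
      simpa using ⟨htrans _ _ _ (hsymm _ _ h), htrans _ _ _ h⟩
  let v : ι → EuclideanSpace ℝ (Finset ι) := fun i =>
    if R i i then EuclideanSpace.single (univ.filter (R i)) 1 else 0
  have hgram : (of fun i j => if R i j then (1 : ℝ) else 0) = gram ℝ v := by
    ext i j
    by_cases hi : R i i
    · by_cases hj : R j j
      · simp [v, hi, hj, EuclideanSpace.inner_single_left, hclass hi]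
      · have : ¬R i j := fun h => hj (hrefl (hsymm _ _ h))
        simp [v, hj, this]
    · have : ¬R i j := fun h => hi (hrefl h)
      simp [v, hi, this]
  exact hgram ▸ posSemidef_gram ℝ v

theorem eq_smul_superlevelIndicator_add {A : Matrix ι ι ℝ} {s : ℝ} (hA : ∀ i j, 0 ≤ A i j)
    (hs : ∀ i j, 0 < A i j → s ≤ A i j) :
    A = s • A.superlevelIndicator s + A.map fun x => max (x - s) 0 := by
  ext i j
  by_cases h : s ≤ A i j
  · simp [superlevelIndicator, h]
  · have hij : A i j = 0 := (hA i j).eq_or_lt.elim Eq.symm fun hpos => absurd (hs i j hpos) h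
    have hs : 0 < s := by linarith
    simp [superlevelIndicator, hij, hs.not_ge, hs.le]

theorem card_filter_pos_map_sub_lt [Fintype ι] {A : Matrix ι ι ℝ} {p : ι × ι}
    (hp : 0 < A p.1 p.2) :
    #{q : ι × ι | 0 < (A.map fun x => max (x - A p.1 p.2) 0) q.1 q.2} <
      #{q : ι × ι | 0 < A q.1 q.2} := by
  refine card_lt_card ((ssubset_iff_of_subset fun q hq => ?_).2 ⟨p, ?_, ?_⟩)
  · simp only [mem_filter, mem_univ, true_and, map_apply, lt_max_iff, lt_irrefl, or_false,
      sub_pos] at hq ⊢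
    exact hp.trans hq
  · simpa using hp
  · simp

namespace IsUltrametric

variable {A : Matrix ι ι ℝ}

theorem map (hA : A.IsUltrametric) {g : ℝ → ℝ} (hg : MonotoneOn g (Set.Ici 0))
    (hg_nonneg : ∀ x, 0 ≤ x → 0 ≤ g x) : (A.map g).IsUltrametric where
  isSymm := hA.isSymm.map g
  nonneg i j := hg_nonneg _ (hA.nonneg i j)
  min_le i j k := by
    have hmin : min (g (A i k)) (g (A k j)) = g (min (A i k) (A k j)) := by
      rcases le_total (A i k) (A k j) with h | h
      · rw [min_eq_left h, min_eq_left (hg (hA.nonneg i k) (hA.nonneg k j) h)]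
      · rw [min_eq_right h, min_eq_right (hg (hA.nonneg k j) (hA.nonneg i k) h)]
    simpa only [map_apply, hmin] using
      hg (le_min (hA.nonneg i k) (hA.nonneg k j)) (hA.nonneg i j) (hA.min_le i j k)

theorem posSemidef_superlevelIndicator [Fintype ι] (hA : A.IsUltrametric) (t : ℝ) :
    (A.superlevelIndicator t).PosSemidef :=
  letI : DecidableRel (t ≤ A · ·) := fun _ _ => inferInstance
  posSemidef_of_symm_of_trans (fun i j h => (hA.isSymm.apply i j).symm ▸ h)
    fun i k j hik hkj => (le_min hik hkj).trans (hA.min_le i j k)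

theorem posSemidef [Fintype ι] (hA : A.IsUltrametric) : A.PosSemidef := by
  induction hN : #{q : ι × ι | 0 < A q.1 q.2} using Nat.strong_induction_on generalizing A with
  | _ N ih =>
  obtain hzero | hne := (filter (fun q : ι × ι => 0 < A q.1 q.2) univ).eq_empty_or_nonempty
  · have : A = 0 := by
      ext i j
      exact le_antisymm (not_lt.1 (filter_eq_empty_iff.1 hzero (mem_univ (i, j))))
        (hA.nonneg i j)
    exact this ▸ PosSemidef.zero
  obtain ⟨p, hp, hmin⟩ := exists_min_image _ (fun q => A q.1 q.2) hne
  simp only [mem_filter, mem_univ, true_and] at hp hmin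
  have hA' := hA.map (g := fun x => max (x - A p.1 p.2) 0)
    (fun x _ y _ h => max_le_max (sub_le_sub_right h _) le_rfl) fun _ _ => le_max_right _ _
  rw [eq_smul_superlevelIndicator_add hA.nonneg fun i j h => hmin (i, j) h]
  exact ((hA.posSemidef_superlevelIndicator _).smul hp.le).add
    (ih _ (hN ▸ card_filter_pos_map_sub_lt hp) hA' rfl)

end IsUltrametric

end Matrix

theorem ultrametric_matrix_posSemidef_general (n : ℕ)
    (A : Matrix (Fin n) (Fin n) ℝ) (hsymm : A.IsSymm)
    (hnonneg : ∀ i j, 0 ≤ A i j)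
    (hultra : ∀ i j k, min (A i k) (A k j) ≤ A i j)
    (g : ℝ → ℝ) (hg_mono : MonotoneOn g (Set.Ici 0))
    (hg_nonneg : ∀ x : ℝ, 0 ≤ x → 0 ≤ g x) :
    (Matrix.of fun i j => g (A i j)).PosSemidef ∧ A.PosSemidef := by
  have hA : A.IsUltrametric := ⟨hsymm, hnonneg, hultra⟩
  exact ⟨(hA.map hg_mono hg_nonneg).posSemidef, hA.posSemidef⟩

/-- if `A` is a symmetric `n × n` matrix with nonnegative entries, diagonally
dominant in the sense `A i i ≥ A i j`, and satisfying the ultrametric inequality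
`A i j ≥ min (A i k) (A k j)`, then for every nondecreasing `g : [0,∞) → [0,∞)`, the matrix
`(g (A i j))_{i,j}` is positive semidefinite; in particular `A` itself is. -/
theorem ultrametric_matrix_posSemidef (n : ℕ) (hn : 1 ≤ n)
    (A : Matrix (Fin n) (Fin n) ℝ) (hsymm : A.IsSymm)
    (hnonneg : ∀ i j, 0 ≤ A i j)
    (hdiag : ∀ i j, A i j ≤ A i i)
    (hultra : ∀ i j k, min (A i k) (A k j) ≤ A i j)
    (g : ℝ → ℝ) (hg_mono : MonotoneOn g (Set.Ici 0))
    (hg_nonneg : ∀ x : ℝ, 0 ≤ x → 0 ≤ g x) :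
    (Matrix.of fun i j => g (A i j)).PosSemidef ∧ A.PosSemidef :=
  ultrametric_matrix_posSemidef_general n A hsymm hnonneg hultra g hg_mono hg_nonneg
end

section
/- Let S > 0, R > 0. Let v : [0,S] × ℝ → [0,∞) be Lipschitz continuous, let b : [0,S] × ℝ → ℝ be measurable with |b(s,h)| ≤ R for all (s,h) and with h ↦ b(s,h) nondecreasing for each s ∈ [0,S], and let g : [0,S] × ℝ → ℝ be locally integrable. Suppose that at almost every (s,h) ∈ (0,S) × ℝ the function v is differentiable and satisfies 2 ∂_s v(s,h) = b(s,h) ∂_h v(s,h) + g(s,h). Then for every s ∈ [0,S], ∫_{−R(S−s)}^{R(S−s)} v(s,h) dh ≤ ∫_{−RS}^{RS} v(0,h) dh + (1/2) ∫_0^s ∫_{−R(S−r)}^{R(S−r)} |g(r,h)| dh dr. -/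
/-!
Integrate `2 ∂_s v = b ∂_h v + g` over the trapezoid `0 ≤ r ≤ s, |h| ≤ R (S - r)`.
On a slice `r = const`, integrating by parts against the nondecreasing drift (`∫ w dβ ≥ 0` since
`v ≥ 0`) bounds `∫ b ∂_h v` by `R` times the values of `v` at the two ends of the slice.
Integrating `∂_s v` over the trapezoid column by column instead gives the top integral minus the
bottom one plus `R` times the integral of `v` along the two slanted sides, i.e. twice what the slice
bounds cost; the surplus is nonnegative and can be dropped.
-/

open MeasureTheory Set Filter Topology
open scoped NNReal

section Lipschitz

variable {K : ℝ≥0} {w β : ℝ → ℝ} {x y : ℝ}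

lemma LipschitzWith.abs_deriv_le (hw : LipschitzWith K w) (t : ℝ) : |deriv w t| ≤ K :=
  norm_deriv_le_of_lipschitz hw

lemma LipschitzWith.intervalIntegral_deriv_eq_sub (hw : LipschitzWith K w) (x y : ℝ) :
    ∫ t in x..y, deriv w t = w y - w x :=
  hw.lipschitzOnWith.absolutelyContinuousOnInterval.integral_deriv_eq_sub

lemma LipschitzWith.intervalIntegrable_deriv (hw : LipschitzWith K w) (x y : ℝ) :
    IntervalIntegrable (deriv w) volume x y :=
  hw.lipschitzOnWith.absolutelyContinuousOnInterval.intervalIntegrable_deriv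

lemma Monotone.intervalIntegrable_mul_deriv (hβ : Monotone β) (hw : LipschitzWith K w)
    (x y : ℝ) : IntervalIntegrable (fun t => β t * deriv w t) volume x y := by
  have hβi := hβ.intervalIntegrable (μ := volume) (a := x) (b := y)
  have hm := (measurable_deriv w).aestronglyMeasurable (μ := volume)
  have hbd : ∀ᵐ t ∂volume, ‖deriv w t‖ ≤ K := ae_of_all _ fun t => hw.abs_deriv_le t
  exact ⟨hβi.1.mul_bdd hm.restrict (ae_restrict_of_ae hbd),
    hβi.2.mul_bdd hm.restrict (ae_restrict_of_ae hbd)⟩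

lemma Monotone.integral_mul_deriv_le_add (hβ : Monotone β) (hw : LipschitzWith K w)
    (hw0 : ∀ t, 0 ≤ w t) (hxy : x ≤ y) :
    ∫ t in x..y, β t * deriv w t ≤ β y * w y - β x * w x + (β y - β x) * (K * (y - x)) := by
  have hpt : ∀ t ∈ Icc x y, β t * deriv w t ≤ β x * deriv w t + (β y - β x) * K := by
    intro t ht
    have h1 : β x ≤ β t := hβ ht.1
    have h2 : β t ≤ β y := hβ ht.2
    have h3 := abs_le.1 (hw.abs_deriv_le t)
    nlinarith
  have hint : IntervalIntegrable (fun t => β x * deriv w t + (β y - β x) * K) volume x y :=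
    ((hw.intervalIntegrable_deriv x y).const_mul _).add intervalIntegrable_const
  calc ∫ t in x..y, β t * deriv w t
      ≤ ∫ t in x..y, (β x * deriv w t + (β y - β x) * K) :=
        intervalIntegral.integral_mono_on hxy (hβ.intervalIntegrable_mul_deriv hw x y) hint hpt
    _ = β x * (w y - w x) + (β y - β x) * (K * (y - x)) := by
        rw [intervalIntegral.integral_add ((hw.intervalIntegrable_deriv x y).const_mul _)
          intervalIntegrable_const, intervalIntegral.integral_const_mul,
          hw.intervalIntegral_deriv_eq_sub, intervalIntegral.integral_const, smul_eq_mul]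
        ring
    _ ≤ β y * w y - β x * w x + (β y - β x) * (K * (y - x)) := by
        nlinarith [hβ hxy, hw0 y]

/-- Integration by parts against the nonnegative measure `dβ`: `∫ β w' = [β w] - ∫ w dβ`.
The error terms of `integral_mul_deriv_le_add` on the `n + 1` pieces of a uniform partition add
up to `(β y - β x) K (y - x) / (n + 1)`. -/
lemma Monotone.integral_mul_deriv_le (hβ : Monotone β) (hw : LipschitzWith K w)
    (hw0 : ∀ t, 0 ≤ w t) (hxy : x ≤ y) :
    ∫ t in x..y, β t * deriv w t ≤ β y * w y - β x * w x := by
  have hbound : ∀ n : ℕ, ∫ t in x..y, β t * deriv w t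
      ≤ β y * w y - β x * w x + (β y - β x) * K * (y - x) * (1 / ((n : ℝ) + 1)) := by
    intro n
    set δ := (y - x) / (n + 1)
    set p : ℕ → ℝ := fun i => x + i * δ
    have hδ : 0 ≤ δ := div_nonneg (sub_nonneg.2 hxy) (by positivity)
    have hp0 : p 0 = x := by simp [p]
    have hpn : p (n + 1) = y := by simp only [p, δ]; push_cast; field_simp; ring
    have hstep : ∀ i, p (i + 1) - p i = δ := fun i => by simp only [p]; push_cast; ring
    calc ∫ t in x..y, β t * deriv w t
        = ∑ i ∈ Finset.range (n + 1), ∫ t in p i..p (i + 1), β t * deriv w t := by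
          rw [intervalIntegral.sum_integral_adjacent_intervals
            fun i _ => hβ.intervalIntegrable_mul_deriv hw _ _, hp0, hpn]
      _ ≤ ∑ i ∈ Finset.range (n + 1),
            ((β (p (i + 1)) * w (p (i + 1)) + β (p (i + 1)) * (K * δ))
              - (β (p i) * w (p i) + β (p i) * (K * δ))) := by
          refine Finset.sum_le_sum fun i _ => ?_
          have := hβ.integral_mul_deriv_le_add hw hw0 (x := p i) (y := p (i + 1))
            (by linarith [hstep i])
          rw [hstep i] at this
          linarith
      _ = β y * w y - β x * w x + (β y - β x) * K * (y - x) * (1 / ((n : ℝ) + 1)) := by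
          rw [Finset.sum_range_sub (fun i => β (p i) * w (p i) + β (p i) * (K * δ)), hp0, hpn]
          simp only [δ]
          ring
  refine ge_of_tendsto' (x := atTop) ?_ hbound
  simpa using tendsto_const_nhds.add
    (tendsto_one_div_add_atTop_nhds_zero_nat.const_mul ((β y - β x) * K * (y - x)))

end Lipschitz

lemma intervalIntegral_indicator_Icc {f : ℝ → ℝ} {a b c d : ℝ} (hac : a ≤ c) (hcd : c ≤ d)
    (hdb : d ≤ b) : ∫ t in a..b, (Icc c d).indicator f t = ∫ t in c..d, f t := by
  rw [intervalIntegral.integral_of_le (hac.trans (hcd.trans hdb)),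
    intervalIntegral.integral_of_le hcd,
    integral_congr_ae (ae_restrict_of_ae (indicator_ae_eq_of_ae_eq_set Ioc_ae_eq_Icc.symm)),
    setIntegral_indicator measurableSet_Ioc, inter_eq_right.2 (Ioc_subset_Ioc hac hdb)]

def trapezoid (S R s : ℝ) : Set (ℝ × ℝ) := {p | p.1 ∈ Icc 0 s ∧ |p.2| ≤ R * (S - p.1)}

/-- The height of `trapezoid S R s` above the abscissa `h`. -/
noncomputable def trapezoidTop (S R s h : ℝ) : ℝ := min s (S - |h| / R)

section Trapezoid

variable {S R s : ℝ} {F : ℝ × ℝ → ℝ} {f : ℝ → ℝ → ℝ}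

lemma isClosed_trapezoid : IsClosed (trapezoid S R s) :=
  (isClosed_Icc.preimage continuous_fst).inter
    (isClosed_le (f := fun p : ℝ × ℝ => |p.2|) (by fun_prop) (by fun_prop))

lemma indicator_trapezoid_mk_left {r : ℝ} (hr : r ∈ Icc 0 s) :
    (fun h => (trapezoid S R s).indicator F (r, h))
      = (Icc (-(R * (S - r))) (R * (S - r))).indicator (fun h => F (r, h)) := by
  ext h
  simp only [indicator, trapezoid, mem_ofPred_eq, mem_Icc, abs_le, hr.1, hr.2, true_and]

lemma indicator_trapezoid_mk_right (hR : 0 < R) (h : ℝ) :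
    (fun r => (trapezoid S R s).indicator F (r, h))
      = (Icc 0 (trapezoidTop S R s h)).indicator (fun r => F (r, h)) := by
  ext r
  have : |h| ≤ R * (S - r) ↔ r ≤ S - |h| / R := by
    rw [le_sub_comm, div_le_iff₀ hR]; constructor <;> intro <;> linarith
  simp only [indicator, trapezoid, trapezoidTop, mem_ofPred_eq, mem_Icc, le_min_iff, this,
    and_assoc]

lemma integrableOn_indicator_trapezoid
    (hF : IntegrableOn F (Icc 0 s ×ˢ Icc (-(R * S)) (R * S))) :
    IntegrableOn ((trapezoid S R s).indicator F) (Ioc 0 s ×ˢ Ioc (-(R * S)) (R * S)) :=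
  (hF.indicator isClosed_trapezoid.measurableSet).mono_set
    (prod_mono Ioc_subset_Icc_self Ioc_subset_Icc_self)

lemma intervalIntegral_indicator_trapezoid_mk_left (hs : s ∈ Icc 0 S) (hR : 0 ≤ R) {r : ℝ}
    (hr : r ∈ Icc 0 s) :
    ∫ h in -(R * S)..R * S, (trapezoid S R s).indicator F (r, h)
      = ∫ h in -(R * (S - r))..R * (S - r), F (r, h) := by
  have : 0 ≤ R * (S - r) := mul_nonneg hR (by linarith [hr.2, hs.2])
  have : R * (S - r) ≤ R * S := by nlinarith [hr.1]
  rw [indicator_trapezoid_mk_left hr]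
  exact intervalIntegral_indicator_Icc (by linarith) (by linarith) (by linarith)

lemma intervalIntegrable_integral_trapezoid (hs : s ∈ Icc 0 S) (hR : 0 ≤ R)
    (hF : IntegrableOn F (Icc 0 s ×ˢ Icc (-(R * S)) (R * S))) :
    IntervalIntegrable (fun r => ∫ h in -(R * (S - r))..R * (S - r), F (r, h)) volume 0 s := by
  have hRS : 0 ≤ R * S := mul_nonneg hR (hs.1.trans hs.2)
  have hT : Integrable ((trapezoid S R s).indicator F)
      ((volume.restrict (Ioc 0 s)).prod (volume.restrict (Ioc (-(R * S)) (R * S)))) := by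
    rw [Measure.prod_restrict, ← Measure.volume_eq_prod]
    exact integrableOn_indicator_trapezoid hF
  rw [intervalIntegrable_iff_integrableOn_Ioc_of_le hs.1]
  refine IntegrableOn.congr_fun hT.integral_prod_left (fun r hr => ?_) measurableSet_Ioc
  rw [← intervalIntegral.integral_of_le (by linarith),
    intervalIntegral_indicator_trapezoid_mk_left hs hR (Ioc_subset_Icc_self hr)]

lemma integral_trapezoid_swap (hs : s ∈ Icc 0 S) (hR : 0 < R)
    (hF : IntegrableOn F (Icc 0 s ×ˢ Icc (-(R * S)) (R * S))) :
    ∫ r in 0..s, ∫ h in -(R * (S - r))..R * (S - r), F (r, h)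
      = ∫ h in -(R * S)..R * S, ∫ r in 0..trapezoidTop S R s h, F (r, h) := by
  have hRS : 0 ≤ R * S := mul_nonneg hR.le (hs.1.trans hs.2)
  have hT : IntegrableOn (Function.uncurry fun r h => (trapezoid S R s).indicator F (r, h))
      (uIoc 0 s ×ˢ uIoc (-(R * S)) (R * S)) := by
    rw [uIoc_of_le hs.1, uIoc_of_le (by linarith)]
    exact integrableOn_indicator_trapezoid hF
  calc _ = ∫ r in 0..s, ∫ h in -(R * S)..R * S, (trapezoid S R s).indicator F (r, h) := by
        refine intervalIntegral.integral_congr fun r hr => ?_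
        rw [uIcc_of_le hs.1] at hr
        exact (intervalIntegral_indicator_trapezoid_mk_left hs hR.le hr).symm
    _ = ∫ h in -(R * S)..R * S, ∫ r in 0..s, (trapezoid S R s).indicator F (r, h) :=
        intervalIntegral_intervalIntegral_swap hT
    _ = _ := by
        refine intervalIntegral.integral_congr fun h hh => ?_
        rw [uIcc_of_le (by linarith), mem_Icc, ← abs_le] at hh
        have : 0 ≤ S - |h| / R := by rw [sub_nonneg, div_le_iff₀ hR]; linarith
        rw [indicator_trapezoid_mk_right hR]
        exact intervalIntegral_indicator_Icc le_rfl (le_min hs.1 this) (min_le_left _ _)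

lemma intervalIntegral_along_trapezoid_side (hR : R ≠ 0) (s : ℝ) :
    ∫ h in R * (S - s)..R * S, f (S - h / R) h = R * ∫ r in 0..s, f r (R * (S - r)) := by
  have hsub : ∀ r, S - (R * S - R * r) / R = r := fun r => by field_simp; ring
  calc ∫ h in R * (S - s)..R * S, f (S - h / R) h
      = ∫ h in R * S - R * s..R * S - R * 0, f (S - h / R) h := by congr 1 <;> ring
    _ = R • ∫ r in 0..s, f (S - (R * S - R * r) / R) (R * S - R * r) :=
        (intervalIntegral.smul_integral_comp_sub_mul (fun h => f (S - h / R) h) R (R * S)).symm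
    _ = R * ∫ r in 0..s, f r (R * (S - r)) := by simp only [hsub, smul_eq_mul, mul_sub]

lemma trapezoidTop_neg (h : ℝ) : trapezoidTop S R s (-h) = trapezoidTop S R s h := by
  simp only [trapezoidTop, abs_neg]

lemma continuous_trapezoidTop (hf : Continuous (Function.uncurry f)) :
    Continuous fun h => f (trapezoidTop S R s h) h :=
  hf.comp ((by unfold trapezoidTop; fun_prop : Continuous fun h => trapezoidTop S R s h).prodMk
    continuous_id)

lemma intervalIntegral_trapezoidTop_of_nonneg (hf : Continuous (Function.uncurry f))
    (hs : s ∈ Icc 0 S) (hR : 0 < R) :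
    ∫ h in 0..R * S, f (trapezoidTop S R s h) h
      = (∫ h in 0..R * (S - s), f s h) + R * ∫ r in 0..s, f r (R * (S - r)) := by
  have hint : ∀ a b, IntervalIntegrable (fun h => f (trapezoidTop S R s h) h) volume a b :=
    fun a b => (continuous_trapezoidTop hf).intervalIntegrable a b
  have hmid : 0 ≤ R * (S - s) := mul_nonneg hR.le (by linarith [hs.2])
  rw [← intervalIntegral.integral_add_adjacent_intervals (hint 0 (R * (S - s))) (hint _ _),
    ← intervalIntegral_along_trapezoid_side hR.ne' s]
  congr 1
  · refine intervalIntegral.integral_congr fun h hh => ?_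
    rw [uIcc_of_le hmid] at hh
    have : s ≤ S - |h| / R := by
      rw [abs_of_nonneg hh.1, le_sub_comm, div_le_iff₀ hR]; linarith [hh.2]
    simp only [trapezoidTop, min_eq_left this]
  · refine intervalIntegral.integral_congr fun h hh => ?_
    rw [uIcc_of_le (by nlinarith [hs.1])] at hh
    have : S - h / R ≤ s := by rw [sub_le_comm, le_div_iff₀ hR]; linarith [hh.1]
    simp only [trapezoidTop, abs_of_nonneg (hmid.trans hh.1), min_eq_right this]

lemma intervalIntegral_trapezoidTop (hf : Continuous (Function.uncurry f)) (hs : s ∈ Icc 0 S)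
    (hR : 0 < R) :
    ∫ h in -(R * S)..R * S, f (trapezoidTop S R s h) h
      = (∫ h in -(R * (S - s))..R * (S - s), f s h)
        + R * ∫ r in 0..s, (f r (R * (S - r)) + f r (-(R * (S - r)))) := by
  have hf' : Continuous (Function.uncurry fun r h => f r (-h)) :=
    hf.comp (continuous_fst.prodMk continuous_snd.neg)
  have hsplit : ∀ (a : ℝ) (k : ℝ → ℝ), Continuous k →
      ∫ h in -a..a, k h = (∫ h in 0..a, k h) + ∫ h in 0..a, k (-h) := by
    intro a k hk
    rw [← intervalIntegral.integral_add_adjacent_intervals (b := 0) (hk.intervalIntegrable _ _)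
      (hk.intervalIntegrable _ _), intervalIntegral.integral_comp_neg, neg_zero, add_comm]
  have hside : ∀ a : ℝ → ℝ, Continuous a →
      IntervalIntegrable (fun r => f r (a r)) volume 0 s :=
    fun a ha => (hf.comp (continuous_id.prodMk ha)).intervalIntegrable 0 s
  rw [hsplit _ _ (continuous_trapezoidTop hf),
    hsplit _ (f s) (hf.comp (continuous_const.prodMk continuous_id)),
    intervalIntegral.integral_add (hside _ (by fun_prop)) (hside _ (by fun_prop))]
  simp only [trapezoidTop_neg]
  rw [intervalIntegral_trapezoidTop_of_nonneg hf hs hR,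
    intervalIntegral_trapezoidTop_of_nonneg hf' hs hR]
  ring

end Trapezoid

lemma LipschitzOnWith.lipschitzWith_uncurry_projIcc {a c : ℝ} (hac : a ≤ c) {K : ℝ≥0}
    {v : ℝ → ℝ → ℝ} (hv : LipschitzOnWith K (Function.uncurry v) (Icc a c ×ˢ univ)) :
    LipschitzWith K (Function.uncurry fun r => v (projIcc a c hac r)) := by
  have hc : LipschitzWith 1 fun p : ℝ × ℝ => ((projIcc a c hac p.1 : ℝ), p.2) := by
    simpa using (((LipschitzWith.subtype_val _).comp (LipschitzWith.projIcc hac)).comp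
      LipschitzWith.prod_fst).prodMk LipschitzWith.prod_snd
  have := hv.comp (hc.lipschitzOnWith (s := univ)) fun p _ => ⟨Subtype.prop _, mem_univ _⟩
  rw [mul_one] at this
  exact lipschitzOnWith_univ.1 this

section Transport

variable {S R s : ℝ} {K : ℝ≥0} {V b g : ℝ → ℝ → ℝ}

lemma LipschitzWith.uncurry_left (hV : LipschitzWith K (Function.uncurry V)) (r : ℝ) :
    LipschitzWith K (V r) := by
  have := hV.comp (LipschitzWith.prodMk_left r)
  rwa [mul_one] at this

lemma LipschitzWith.uncurry_right (hV : LipschitzWith K (Function.uncurry V)) (h : ℝ) :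
    LipschitzWith K fun r => V r h := by
  have := hV.comp (LipschitzWith.prodMk_right h)
  rwa [mul_one] at this

lemma LipschitzWith.integrableOn_deriv_fst (hV : LipschitzWith K (Function.uncurry V))
    {T : Set (ℝ × ℝ)} (hT : IsCompact T) :
    IntegrableOn (fun p : ℝ × ℝ => deriv (fun r => V r p.2) p.1) T := by
  have hmeas : Measurable fun p : ℝ × ℝ => deriv (fun r => V r p.2) p.1 :=
    (measurable_deriv_with_param (f := fun h r => V r h)
      (hV.continuous.comp continuous_swap)).comp measurable_swap
  exact IntegrableOn.of_bound hT.measure_lt_top hmeas.aestronglyMeasurable K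
    (ae_of_all _ fun p => (hV.uncurry_right p.2).abs_deriv_le p.1)

lemma integral_trapezoid_deriv_fst (hV : LipschitzWith K (Function.uncurry V))
    (hs : s ∈ Icc 0 S) (hR : 0 < R) :
    ∫ r in 0..s, ∫ h in -(R * (S - r))..R * (S - r), deriv (fun r' => V r' h) r
      = (∫ h in -(R * (S - s))..R * (S - s), V s h) - (∫ h in -(R * S)..R * S, V 0 h)
        + R * ∫ r in 0..s, (V r (R * (S - r)) + V r (-(R * (S - r)))) := by
  have hcont := hV.continuous
  calc _ = ∫ h in -(R * S)..R * S, ∫ r in 0..trapezoidTop S R s h, deriv (fun r' => V r' h) r :=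
        integral_trapezoid_swap (F := fun p => deriv (fun r => V r p.2) p.1) hs hR
          (hV.integrableOn_deriv_fst (isCompact_Icc.prod isCompact_Icc))
    _ = ∫ h in -(R * S)..R * S, (V (trapezoidTop S R s h) h - V 0 h) := by
        simp only [(hV.uncurry_right _).intervalIntegral_deriv_eq_sub]
    _ = _ := by
        rw [intervalIntegral.integral_sub (f := fun h => V (trapezoidTop S R s h) h)
          (g := fun h => V 0 h) ((continuous_trapezoidTop hcont).intervalIntegrable _ _)
          ((hcont.comp (continuous_const.prodMk continuous_id)).intervalIntegrable _ _),
          intervalIntegral_trapezoidTop hcont hs hR]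
        ring

lemma ae_two_mul_integral_deriv_fst_le (hR : 0 < R) (hs : s ∈ Icc 0 S)
    (hV : LipschitzWith K (Function.uncurry V)) (hV0 : ∀ r ∈ Icc 0 S, ∀ h, 0 ≤ V r h)
    (hb_bdd : ∀ r ∈ Icc 0 S, ∀ h, |b r h| ≤ R) (hb_mono : ∀ r ∈ Icc 0 S, Monotone (b r))
    (hg : LocallyIntegrable (Function.uncurry g) volume)
    (hpde : ∀ᵐ p : ℝ × ℝ, p ∈ Ioo 0 S ×ˢ univ →
      2 * deriv (fun r => V r p.2) p.1 = b p.1 p.2 * deriv (V p.1) p.2 + g p.1 p.2) :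
    ∀ᵐ r ∂volume.restrict (Icc 0 s),
      2 * ∫ h in -(R * (S - r))..R * (S - r), deriv (fun r' => V r' h) r
        ≤ R * (V r (R * (S - r)) + V r (-(R * (S - r))))
          + ∫ h in -(R * (S - r))..R * (S - r), |g r h| := by
  rw [Measure.volume_eq_prod] at hpde
  have hg_slices : ∀ᵐ r ∂volume.restrict (Icc 0 s),
      IntegrableOn (g r) (Icc (-(R * S)) (R * S)) := by
    have := hg.integrableOn_isCompact (isCompact_Icc.prod isCompact_Icc :
      IsCompact (Icc 0 s ×ˢ Icc (-(R * S)) (R * S)))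
    rw [IntegrableOn, Measure.volume_eq_prod, ← Measure.prod_restrict] at this
    exact this.prod_right_ae
  have hIoo : ∀ᵐ r ∂volume.restrict (Icc 0 s), r ∈ Ioo 0 s := by
    rw [← Measure.restrict_congr_set Ioo_ae_eq_Icc]
    exact ae_restrict_mem measurableSet_Ioo
  filter_upwards [ae_restrict_of_ae (Measure.ae_ae_of_ae_prod hpde), hg_slices, hIoo]
    with r hr_pde hr_g hr
  have hrS : r ∈ Icc 0 S := ⟨hr.1.le, hr.2.le.trans hs.2⟩
  set a := R * (S - r)
  have ha : 0 ≤ a := mul_nonneg hR.le (by linarith [hrS.2])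
  have haS : a ≤ R * S := by nlinarith [hr.1]
  have hgi : IntervalIntegrable (g r) volume (-a) a := by
    rw [intervalIntegrable_iff_integrableOn_Icc_of_le (by linarith)]
    exact hr_g.mono_set (Icc_subset_Icc (by linarith) haS)
  have hbV : b r a * V r a - b r (-a) * V r (-a) ≤ R * (V r a + V r (-a)) := by
    have h1 := abs_le.1 (hb_bdd r hrS a)
    have h2 := abs_le.1 (hb_bdd r hrS (-a))
    nlinarith [hV0 r hrS a, hV0 r hrS (-a)]
  calc 2 * ∫ h in -a..a, deriv (fun r' => V r' h) r
      = ∫ h in -a..a, 2 * deriv (fun r' => V r' h) r :=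
        (intervalIntegral.integral_const_mul _ _).symm
    _ = ∫ h in -a..a, (b r h * deriv (V r) h + g r h) :=
        intervalIntegral.integral_congr_ae (by
          filter_upwards [hr_pde] with h hh _ using hh ⟨⟨hr.1, hr.2.trans_le hs.2⟩, mem_univ h⟩)
    _ = (∫ h in -a..a, b r h * deriv (V r) h) + ∫ h in -a..a, g r h :=
        intervalIntegral.integral_add
          ((hb_mono r hrS).intervalIntegrable_mul_deriv (hV.uncurry_left r) _ _) hgi
    _ ≤ (b r a * V r a - b r (-a) * V r (-a)) + ∫ h in -a..a, |g r h| :=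
        add_le_add
          ((hb_mono r hrS).integral_mul_deriv_le (hV.uncurry_left r) (hV0 r hrS) (by linarith))
          ((le_abs_self _).trans (intervalIntegral.abs_integral_le_integral_abs (by linarith)))
    _ ≤ R * (V r a + V r (-a)) + ∫ h in -a..a, |g r h| := by linarith

lemma transport_estimate_of_lipschitzWith (hR : 0 < R) (hs : s ∈ Icc 0 S)
    (hV : LipschitzWith K (Function.uncurry V)) (hV0 : ∀ r ∈ Icc 0 S, ∀ h, 0 ≤ V r h)
    (hb_bdd : ∀ r ∈ Icc 0 S, ∀ h, |b r h| ≤ R) (hb_mono : ∀ r ∈ Icc 0 S, Monotone (b r))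
    (hg : LocallyIntegrable (Function.uncurry g) volume)
    (hpde : ∀ᵐ p : ℝ × ℝ, p ∈ Ioo 0 S ×ˢ univ →
      2 * deriv (fun r => V r p.2) p.1 = b p.1 p.2 * deriv (V p.1) p.2 + g p.1 p.2) :
    ∫ h in -(R * (S - s))..R * (S - s), V s h
      ≤ (∫ h in -(R * S)..R * S, V 0 h)
        + 1 / 2 * ∫ r in 0..s, ∫ h in -(R * (S - r))..R * (S - r), |g r h| := by
  have hrect : IsCompact (Icc 0 s ×ˢ Icc (-(R * S)) (R * S)) := isCompact_Icc.prod isCompact_Icc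
  have hside : ∀ a : ℝ → ℝ, Continuous a → Continuous fun r => V r (a r) :=
    fun a ha => hV.continuous.comp (continuous_id.prodMk ha)
  have hsides : IntervalIntegrable (fun r => V r (R * (S - r)) + V r (-(R * (S - r))))
      volume 0 s :=
    ((hside _ (by fun_prop)).add (hside _ (by fun_prop))).intervalIntegrable _ _
  have hG : IntervalIntegrable (fun r => ∫ h in -(R * (S - r))..R * (S - r), |g r h|) volume 0 s :=
    intervalIntegrable_integral_trapezoid hs hR.le (hg.integrableOn_isCompact hrect).abs
  have hslices : ∫ r in 0..s, 2 * ∫ h in -(R * (S - r))..R * (S - r), deriv (fun r' => V r' h) r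
      ≤ ∫ r in 0..s, (R * (V r (R * (S - r)) + V r (-(R * (S - r))))
          + ∫ h in -(R * (S - r))..R * (S - r), |g r h|) :=
    intervalIntegral.integral_mono_ae_restrict hs.1
      ((intervalIntegrable_integral_trapezoid hs hR.le
        (hV.integrableOn_deriv_fst hrect)).const_mul 2)
      ((hsides.const_mul R).add hG)
      (ae_two_mul_integral_deriv_fst_le hR hs hV hV0 hb_bdd hb_mono hg hpde)
  rw [intervalIntegral.integral_const_mul, intervalIntegral.integral_add (hsides.const_mul R) hG,
    intervalIntegral.integral_const_mul, integral_trapezoid_deriv_fst hV hs hR] at hslices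
  have hsides_nonneg : 0 ≤ ∫ r in 0..s, (V r (R * (S - r)) + V r (-(R * (S - r)))) :=
    intervalIntegral.integral_nonneg hs.1 fun r hr =>
      add_nonneg (hV0 r ⟨hr.1, hr.2.trans hs.2⟩ _) (hV0 r ⟨hr.1, hr.2.trans hs.2⟩ _)
  linarith [mul_nonneg hR.le hsides_nonneg]

end Transport

theorem transport_estimate_general (S R : ℝ) (hR : 0 < R)
    (v b g : ℝ → ℝ → ℝ)
    (hv_nonneg : ∀ s ∈ Set.Icc (0:ℝ) S, ∀ h : ℝ, 0 ≤ v s h)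
    (hv_lip : ∃ K : NNReal,
      LipschitzOnWith K (Function.uncurry v) (Set.Icc (0:ℝ) S ×ˢ (Set.univ : Set ℝ)))
    (hb_bdd : ∀ s ∈ Set.Icc (0:ℝ) S, ∀ h : ℝ, |b s h| ≤ R)
    (hb_mono : ∀ s ∈ Set.Icc (0:ℝ) S, Monotone (b s))
    (hg_locint : LocallyIntegrable (Function.uncurry g) volume)
    (hpde : ∀ᵐ p : ℝ × ℝ ∂volume, p ∈ Set.Ioo (0:ℝ) S ×ˢ (Set.univ : Set ℝ) →
      DifferentiableAt ℝ (Function.uncurry v) p ∧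
      2 * deriv (fun s' => v s' p.2) p.1 = b p.1 p.2 * deriv (fun h' => v p.1 h') p.2
        + g p.1 p.2) :
    ∀ s ∈ Set.Icc (0:ℝ) S,
      (∫ h in (-(R * (S - s)))..(R * (S - s)), v s h)
        ≤ (∫ h in (-(R * S))..(R * S), v 0 h)
          + (1 / 2) * ∫ r in (0:ℝ)..s,
              (∫ h in (-(R * (S - r)))..(R * (S - r)), |g r h|) := by
  intro s hs
  obtain ⟨K, hK⟩ := hv_lip
  have hS : 0 ≤ S := hs.1.trans hs.2
  have hproj : ∀ r ∈ Icc 0 S, (projIcc 0 S hS r : ℝ) = r := fun r hr => by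
    rw [projIcc_of_mem hS hr]
  have hpde' : ∀ᵐ p : ℝ × ℝ, p ∈ Ioo 0 S ×ˢ univ →
      2 * deriv (fun r => v (projIcc 0 S hS r) p.2) p.1
        = b p.1 p.2 * deriv (v (projIcc 0 S hS p.1)) p.2 + g p.1 p.2 := by
    filter_upwards [hpde] with p hp hmem
    have hloc : (fun r => v (projIcc 0 S hS r) p.2) =ᶠ[𝓝 p.1] fun r => v r p.2 :=
      eventually_of_mem (isOpen_Ioo.mem_nhds hmem.1) fun r hr => by
        simp only [hproj r (Ioo_subset_Icc_self hr)]
    rw [hloc.deriv_eq, hproj p.1 (Ioo_subset_Icc_self hmem.1)]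
    exact (hp hmem).2
  have := transport_estimate_of_lipschitzWith hR hs (hK.lipschitzWith_uncurry_projIcc hS)
    (fun r hr => by rw [hproj r hr]; exact hv_nonneg r hr) hb_bdd hb_mono hg_locint hpde'
  rwa [hproj s hs, hproj 0 ⟨le_rfl, hS⟩] at this

/-- finite speed of propagation for the approximate transport equation
`2 ∂_s v = b ∂_h v + g` with bounded drift `b` (`|b| ≤ R`) that is nondecreasing in `h`,
for a nonnegative Lipschitz function `v` on `[0,S] × ℝ`:
`∫_{-R(S-s)}^{R(S-s)} v(s,h) dh ≤ ∫_{-RS}^{RS} v(0,h) dh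
  + (1/2) ∫_0^s ∫_{-R(S-r)}^{R(S-r)} |g(r,h)| dh dr`. -/
theorem transport_estimate (S R : ℝ) (hS : 0 < S) (hR : 0 < R)
    (v b g : ℝ → ℝ → ℝ)
    (hv_nonneg : ∀ s ∈ Set.Icc (0:ℝ) S, ∀ h : ℝ, 0 ≤ v s h)
    (hv_lip : ∃ K : NNReal,
      LipschitzOnWith K (Function.uncurry v) (Set.Icc (0:ℝ) S ×ˢ (Set.univ : Set ℝ)))
    (hb_meas : Measurable (Function.uncurry b))
    (hb_bdd : ∀ s ∈ Set.Icc (0:ℝ) S, ∀ h : ℝ, |b s h| ≤ R)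
    (hb_mono : ∀ s ∈ Set.Icc (0:ℝ) S, Monotone (b s))
    (hg_locint : LocallyIntegrable (Function.uncurry g) volume)
    (hpde : ∀ᵐ p : ℝ × ℝ ∂volume, p ∈ Set.Ioo (0:ℝ) S ×ˢ (Set.univ : Set ℝ) →
      DifferentiableAt ℝ (Function.uncurry v) p ∧
      2 * deriv (fun s' => v s' p.2) p.1 = b p.1 p.2 * deriv (fun h' => v p.1 h') p.2
        + g p.1 p.2) :
    ∀ s ∈ Set.Icc (0:ℝ) S,
      (∫ h in (-(R * (S - s)))..(R * (S - s)), v s h)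
        ≤ (∫ h in (-(R * S))..(R * S), v 0 h)
          + (1 / 2) * ∫ r in (0:ℝ)..s,
              (∫ h in (-(R * (S - r)))..(R * (S - r)), |g r h|) :=
  transport_estimate_general S R hR v b g hv_nonneg hv_lip hb_bdd hb_mono hg_locint hpde
end
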